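/- arXiv:0710.1692 — 4 statements merged into one kernel-verified Lean document; each statement's English description precedes it below -/
import Mathlib

section
/- Let X be a normed space, C a nonempty convex subset, T : C → C nonexpansive, (λ_n)_{n≥1} ⊆ [0,1], and (x_n) the Halpern iteration starting at x ∈ C. Then for all n ≥ 1, ‖x_{n+1} - x_n‖ ≤ (1-λ_{n+1})·‖x_n - x_{n-1}‖ + |λ_{n+1} - λ_n|·‖x - T x_{n-1}‖. -/
theorem halpern_consecutive_bound
    {X : Type*} [NormedAddCommGroup X] [NormedSpace ℝ X]
    (C : Set X) (hC : C.Nonempty) (hconv : Convex ℝ C)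
    (T : X → X) (hTmaps : Set.MapsTo T C C)
    (hT : ∀ u ∈ C, ∀ v ∈ C, ‖T u - T v‖ ≤ ‖u - v‖)
    (lam : ℕ → ℝ) (hlam : ∀ n ≥ 1, lam n ∈ Set.Icc (0:ℝ) 1)
    (x₀ : X) (hx₀ : x₀ ∈ C) (x : ℕ → X) (hx0 : x 0 = x₀)
    (hrec : ∀ n : ℕ, x (n + 1) = lam (n + 1) • x₀ + (1 - lam (n + 1)) • T (x n)) :
    ∀ n ≥ 1, ‖x (n + 1) - x n‖ ≤
      (1 - lam (n + 1)) * ‖x n - x (n - 1)‖ + |lam (n + 1) - lam n| * ‖x₀ - T (x (n - 1))‖ := by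
  have hmem : ∀ n, x n ∈ C := by
    intro n
    induction n with
    | zero => rw [hx0]; exact hx₀
    | succ k ih =>
      rw [hrec k]
      obtain ⟨h0, h1⟩ := hlam (k + 1) (Nat.le_add_left 1 k)
      exact hconv hx₀ (hTmaps ih) h0 (by linarith) (by ring)
  intro n hn
  obtain ⟨m, rfl⟩ := Nat.exists_eq_add_of_le hn
  simp only [Nat.add_sub_cancel_left] at *
  have key : x (1 + m + 1) - x (1 + m) =
      (lam (1 + m + 1) - lam (1 + m)) • (x₀ - T (x m)) +
      (1 - lam (1 + m + 1)) • (T (x (1 + m)) - T (x m)) := by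
    have h1 : x (1 + m + 1) = lam (1 + m + 1) • x₀ + (1 - lam (1 + m + 1)) • T (x (1 + m)) :=
      hrec (1 + m)
    have h2 : x (1 + m) = lam (1 + m) • x₀ + (1 - lam (1 + m)) • T (x m) := by
      have := hrec m; rwa [show m + 1 = 1 + m by ring] at this
    rw [h1, h2]
    module
  rw [key]
  calc ‖(lam (1 + m + 1) - lam (1 + m)) • (x₀ - T (x m)) +
      (1 - lam (1 + m + 1)) • (T (x (1 + m)) - T (x m))‖
      ≤ ‖(lam (1 + m + 1) - lam (1 + m)) • (x₀ - T (x m))‖ +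
        ‖(1 - lam (1 + m + 1)) • (T (x (1 + m)) - T (x m))‖ := norm_add_le _ _
    _ ≤ |lam (1 + m + 1) - lam (1 + m)| * ‖x₀ - T (x m)‖ +
        (1 - lam (1 + m + 1)) * ‖x (1 + m) - x m‖ := by
        rw [norm_smul, norm_smul, Real.norm_eq_abs, Real.norm_eq_abs]
        have h01 := hlam (1 + m + 1) (by omega)
        have hnn : (0:ℝ) ≤ 1 - lam (1 + m + 1) := by linarith [h01.2]
        rw [abs_of_nonneg hnn]
        have := hT _ (hmem (1 + m)) _ (hmem m)
        nlinarith [abs_nonneg (lam (1 + m + 1) - lam (1 + m)), norm_nonneg (x₀ - T (x m))]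
    _ ≤ (1 - lam (1 + m + 1)) * ‖x (1 + m) - x m‖ +
        |lam (1 + m + 1) - lam (1 + m)| * ‖x₀ - T (x m)‖ := le_of_eq (by ring)
end

section
/- Let (λ_n)_{n≥1} ⊆ [0,1] and nonnegative real sequences (a_n), (b_n) satisfy a_{n+1} ≤ (1-λ_{n+1})·a_n + b_n for all n ≥ 1. Assume ∑ λ_n diverges with rate of divergence δ : ℕ* → ℕ* (i.e. ∑_{i=1}^{δ(n)} λ_i ≥ n for all n ≥ 1), ∑ b_n converges with Cauchy modulus γ : (0,∞) → ℕ* for its partial sums s_m := ∑_{i=1}^m b_i (i.e. s_{γ(ε)+n} - s_{γ(ε)} < ε for all ε > 0, n ≥ 1), and D ∈ ℕ* is an upper bound on (a_n). Then lim a_n = 0, and moreover for all ε ∈ (0,2) and all n ≥ δ(γ(ε/2) + 1 + ⌈ln(2D/ε)⌉), we have a_n < ε. -/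
/-!
Unrolling the recursion from `N := γ(ε/2) + 1` gives
`a n ≤ (∏_{N < i ≤ n} (1 - λ_i)) a_N + ∑_{N ≤ k < n} b_k`.
The sum is a tail of `∑ b` past `γ(ε/2)`, hence `< ε/2`. Since `1 - x ≤ exp (-x)`, the product
is at most `exp (-∑_{N < i ≤ n} λ_i)`, and as `λ_i ≤ 1` the first `N` terms of `∑ λ` contribute
at most `N`, so past `δ(N + K)` the exponent is at most `-K` with `K := ⌈ln(2D/ε)⌉`, which makes
the first term at most `ε/2`.
-/

open Finset Real

theorem le_prod_mul_add_sum_of_le_mul_add {a b c : ℕ → ℝ} {N : ℕ}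
    (hc : ∀ n > N, c n ∈ Set.Icc (0 : ℝ) 1) (hb : ∀ n ≥ N, 0 ≤ b n)
    (hrec : ∀ n ≥ N, a (n + 1) ≤ c (n + 1) * a n + b n) {n : ℕ} (hn : N ≤ n) :
    a n ≤ (∏ i ∈ Ioc N n, c i) * a N + ∑ k ∈ Ico N n, b k := by
  induction n, hn using Nat.le_induction with
  | base => simp
  | succ n hn ih =>
    rw [prod_Ioc_succ_top hn, sum_Ico_succ_top hn]
    obtain ⟨hc0, hc1⟩ := hc (n + 1) (by omega)
    have hS : 0 ≤ ∑ k ∈ Ico N n, b k := sum_nonneg fun k hk ↦ hb k (mem_Ico.1 hk).1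
    calc a (n + 1) ≤ c (n + 1) * a n + b n := hrec n hn
      _ ≤ c (n + 1) * ((∏ i ∈ Ioc N n, c i) * a N + ∑ k ∈ Ico N n, b k) + b n := by gcongr
      _ ≤ _ := by nlinarith

theorem prod_one_sub_le_exp_neg_sum {ι : Type*} (s : Finset ι) {x : ι → ℝ}
    (hx : ∀ i ∈ s, x i ≤ 1) : ∏ i ∈ s, (1 - x i) ≤ exp (-∑ i ∈ s, x i) := by
  rw [← sum_neg_distrib, exp_sum]
  exact prod_le_prod (fun i hi ↦ sub_nonneg.2 (hx i hi)) fun i _ ↦ one_sub_le_exp_neg _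

theorem prod_one_sub_mul_le_exp_neg_mul {ι : Type*} {s : Finset ι} {x : ι → ℝ}
    (hx : ∀ i ∈ s, x i ≤ 1) {K y D : ℝ} (hK : K ≤ ∑ i ∈ s, x i) (hD : 0 ≤ D) (hy : y ≤ D) :
    (∏ i ∈ s, (1 - x i)) * y ≤ exp (-K) * D :=
  calc (∏ i ∈ s, (1 - x i)) * y ≤ (∏ i ∈ s, (1 - x i)) * D :=
        mul_le_mul_of_nonneg_left hy (prod_nonneg fun i hi ↦ sub_nonneg.2 (hx i hi))
    _ ≤ exp (-K) * D := by
        gcongr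
        exact (prod_one_sub_le_exp_neg_sum s hx).trans (exp_le_exp.2 (neg_le_neg hK))

theorem Real.exp_neg_mul_le_of_log_div_le {x c K : ℝ} (hc : 0 < c) (hK : log (x / c) ≤ K) :
    exp (-K) * x ≤ c := by
  have hx : x ≤ c * exp K := by
    rw [← div_le_iff₀' hc]
    exact (le_exp_log _).trans (exp_le_exp.2 hK)
  calc exp (-K) * x ≤ exp (-K) * (c * exp K) := by gcongr
    _ = c := by rw [mul_left_comm, ← exp_add, neg_add_cancel, exp_zero, mul_one]

theorem Nat.Icc_one_eq_Ioc_zero (m : ℕ) : Icc 1 m = Ioc 0 m := by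
  simpa using Icc_add_one_left_eq_Ioc 0 m

section RateOfDivergence

variable {lam : ℕ → ℝ} (hlam : ∀ n ≥ 1, lam n ∈ Set.Icc (0 : ℝ) 1)
include hlam

theorem sum_Icc_one_le_of_le_one (m : ℕ) : ∑ i ∈ Icc 1 m, lam i ≤ m := by
  simpa using sum_le_card_nsmul (Icc 1 m) lam 1 fun i hi ↦ (hlam i (mem_Icc.1 hi).1).2

theorem le_of_le_sum_Icc_one {m M : ℕ} (h : (m : ℝ) ≤ ∑ i ∈ Icc 1 M, lam i) : m ≤ M := by
  exact_mod_cast h.trans (sum_Icc_one_le_of_le_one hlam M)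

theorem le_sum_Ioc_of_add_le_sum_Icc_one {N K M n : ℕ}
    (h : ((N + K : ℕ) : ℝ) ≤ ∑ i ∈ Icc 1 M, lam i) (hMn : M ≤ n) :
    (K : ℝ) ≤ ∑ i ∈ Ioc N n, lam i := by
  have hNM := le_of_le_sum_Icc_one hlam h
  have hmono : ∑ i ∈ Icc 1 M, lam i ≤ ∑ i ∈ Icc 1 n, lam i :=
    sum_le_sum_of_subset_of_nonneg (Icc_subset_Icc_right hMn)
      fun i hi _ ↦ (hlam i (mem_Icc.1 hi).1).1
  have hsplit : ∑ i ∈ Icc 1 n, lam i = ∑ i ∈ Icc 1 N, lam i + ∑ i ∈ Ioc N n, lam i := by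
    simp only [Nat.Icc_one_eq_Ioc_zero]
    rw [sum_Ioc_consecutive _ (Nat.zero_le N) (by omega)]
  have hN := sum_Icc_one_le_of_le_one hlam N
  push_cast at h
  linarith

end RateOfDivergence

theorem sum_Ico_lt_of_cauchy_modulus {b : ℕ → ℝ} {g : ℕ} {ε : ℝ} (hε : 0 < ε)
    (hg : ∀ m ≥ 1, (∑ i ∈ Icc 1 (g + m), b i) - (∑ i ∈ Icc 1 g, b i) < ε) (n : ℕ) :
    ∑ k ∈ Ico (g + 1) n, b k < ε := by
  rcases le_or_gt n (g + 1) with hn | hn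
  · simpa [Ico_eq_empty_of_le hn] using hε
  · have hIco : Ico (g + 1) n = Ioc g (g + (n - 1 - g)) := by
      ext; simp only [mem_Ico, mem_Ioc]; omega
    have := hg (n - 1 - g) (by omega)
    simp only [Nat.Icc_one_eq_Ioc_zero] at this
    rwa [← sum_Ioc_consecutive _ (Nat.zero_le g) (by omega), add_sub_cancel_left, ← hIco] at this

theorem tendsto_atTop_zero_of_eventually_lt {a : ℕ → ℝ} {c : ℝ} (hc : 0 < c)
    (ha : ∀ᶠ n in Filter.atTop, 0 ≤ a n)
    (h : ∀ ε, 0 < ε → ε < c → ∀ᶠ n in Filter.atTop, a n < ε) :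
    Filter.Tendsto a Filter.atTop (nhds 0) := by
  refine tendsto_order.2 ⟨fun l hl ↦ ha.mono fun n hn ↦ hl.trans_le hn, fun u hu ↦ ?_⟩
  have hε : 0 < min u (c / 2) := lt_min hu (half_pos hc)
  exact (h _ hε ((min_le_right _ _).trans_lt (half_lt_self hc))).mono
    fun n hn ↦ hn.trans_le (min_le_left _ _)

theorem quantitative_liu_lemma_general
    (lam a b : ℕ → ℝ)
    (hlam : ∀ n ≥ 1, lam n ∈ Set.Icc (0:ℝ) 1)
    (ha : ∀ n ≥ 1, 0 ≤ a n) (hb : ∀ n ≥ 1, 0 ≤ b n)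
    (hrec : ∀ n ≥ 1, a (n + 1) ≤ (1 - lam (n + 1)) * a n + b n)
    (δ : ℕ → ℕ)
    (hδ : ∀ n : ℕ, 1 ≤ n → (n : ℝ) ≤ ∑ i ∈ Finset.Icc 1 (δ n), lam i)
    (γ : ℝ → ℕ)
    (hγ : ∀ ε > (0:ℝ), ∀ n ≥ 1,
      (∑ i ∈ Finset.Icc 1 (γ ε + n), b i) - (∑ i ∈ Finset.Icc 1 (γ ε), b i) < ε)
    (D : ℕ) (hD : ∀ n ≥ 1, a n ≤ (D : ℝ)) :
    Filter.Tendsto a Filter.atTop (nhds 0) ∧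
    ∀ ε : ℝ, 0 < ε → ε < 2 →
      ∀ n : ℕ, δ (γ (ε / 2) + 1 + ⌈Real.log (2 * D / ε)⌉₊) ≤ n → a n < ε := by
  have key : ∀ ε : ℝ, 0 < ε → ε < 2 →
      ∀ n : ℕ, δ (γ (ε / 2) + 1 + ⌈Real.log (2 * D / ε)⌉₊) ≤ n → a n < ε := by
    intro ε hε _ n hn
    set N := γ (ε / 2) + 1
    set K := ⌈Real.log (2 * D / ε)⌉₊
    have hδNK := hδ (N + K) (by omega)
    have hNn : N ≤ n := by have := le_of_le_sum_Icc_one hlam hδNK; omega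
    have hunroll := le_prod_mul_add_sum_of_le_mul_add (c := fun i ↦ 1 - lam i)
      (fun i hi ↦ ⟨sub_nonneg.2 (hlam i (by omega)).2, sub_le_self _ (hlam i (by omega)).1⟩)
      (fun i hi ↦ hb i (by omega)) (fun i hi ↦ hrec i (by omega)) hNn
    have hprod : (∏ i ∈ Ioc N n, (1 - lam i)) * a N ≤ ε / 2 := by
      have hexp := exp_neg_mul_le_of_log_div_le hε (Nat.le_ceil (log (2 * D / ε)))
      calc (∏ i ∈ Ioc N n, (1 - lam i)) * a N ≤ exp (-K) * D :=
            prod_one_sub_mul_le_exp_neg_mul (fun i hi ↦ (hlam i (Nat.one_le_of_lt (mem_Ioc.1 hi).1)).2)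
              (le_sum_Ioc_of_add_le_sum_Icc_one hlam hδNK hn) D.cast_nonneg (hD N (by omega))
        _ ≤ ε / 2 := by linarith
    have hsum := sum_Ico_lt_of_cauchy_modulus (half_pos hε) (hγ (ε / 2) (half_pos hε)) n
    linarith
  refine ⟨tendsto_atTop_zero_of_eventually_lt two_pos (Filter.eventually_atTop.2 ⟨1, ha⟩)
    fun ε hε hε2 ↦ Filter.eventually_atTop.2 ⟨_, key ε hε hε2⟩, key⟩

theorem quantitative_liu_lemma
    (lam a b : ℕ → ℝ)
    (hlam : ∀ n ≥ 1, lam n ∈ Set.Icc (0:ℝ) 1)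
    (ha : ∀ n ≥ 1, 0 ≤ a n) (hb : ∀ n ≥ 1, 0 ≤ b n)
    (hrec : ∀ n ≥ 1, a (n + 1) ≤ (1 - lam (n + 1)) * a n + b n)
    (δ : ℕ → ℕ) (hδpos : ∀ n : ℕ, 1 ≤ n → 1 ≤ δ n)
    (hδ : ∀ n : ℕ, 1 ≤ n → (n : ℝ) ≤ ∑ i ∈ Finset.Icc 1 (δ n), lam i)
    (γ : ℝ → ℕ) (hγpos : ∀ ε > (0:ℝ), 1 ≤ γ ε)
    (hγ : ∀ ε > (0:ℝ), ∀ n ≥ 1,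
      (∑ i ∈ Finset.Icc 1 (γ ε + n), b i) - (∑ i ∈ Finset.Icc 1 (γ ε), b i) < ε)
    (D : ℕ) (hDpos : 1 ≤ D) (hD : ∀ n ≥ 1, a n ≤ (D : ℝ)) :
    Filter.Tendsto a Filter.atTop (nhds 0) ∧
    ∀ ε : ℝ, 0 < ε → ε < 2 →
      ∀ n : ℕ, δ (γ (ε / 2) + 1 + ⌈Real.log (2 * D / ε)⌉₊) ≤ n → a n < ε :=
  quantitative_liu_lemma_general lam a b hlam ha hb hrec δ hδ γ hγ D hD
end

section
/- Let X be a normed space, C ⊆ X nonempty convex, T : C → C nonexpansive, and (λ_n)_{n≥1} ⊆ [0,1] with lim λ_n = 0, ∑ λ_n divergent, and ∑ |λ_{n+1} - λ_n| convergent. If x ∈ C is such that the Halpern iteration (x_n) starting at x is bounded, then lim_{n→∞} ‖x_n - T x_n‖ = 0. -/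
/-!
With `M` a bound for `‖x₀ - T xₙ‖`, nonexpansiveness gives the recursive inequality
`‖xₙ₊₂ - xₙ₊₁‖ ≤ (1 - λₙ₊₂) ‖xₙ₊₁ - xₙ‖ + |λₙ₊₂ - λₙ₊₁| M`. Since `∑ λₙ = ∞` and
`∑ |λₙ₊₂ - λₙ₊₁| < ∞`, Xu's lemma yields `‖xₙ₊₁ - xₙ‖ → 0`, and then
`‖xₙ - T xₙ‖ ≤ ‖xₙ₊₁ - xₙ‖ + λₙ₊₁ M → 0`.
-/

open Filter Finset Set Topology

section XuLemma

variable {a μ c : ℕ → ℝ}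

lemma tendsto_prod_one_sub_of_not_summable (hμ : ∀ n, μ n ∈ Icc (0 : ℝ) 1)
    (hdiv : ¬Summable μ) : Tendsto (fun m => ∏ i ∈ range m, (1 - μ i)) atTop (𝓝 0) := by
  have hsum : Tendsto (fun m => ∑ i ∈ range m, μ i) atTop atTop :=
    (not_summable_iff_tendsto_nat_atTop_of_nonneg fun n => (hμ n).1).1 hdiv
  refine squeeze_zero (fun m => prod_nonneg fun i _ => sub_nonneg.2 (hμ i).2) (fun m => ?_)
    (Real.tendsto_exp_atBot.comp (tendsto_neg_atTop_atBot.comp hsum))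
  rw [Function.comp_apply, Function.comp_apply, ← sum_neg_distrib, Real.exp_sum]
  exact prod_le_prod (fun i _ => sub_nonneg.2 (hμ i).2) fun i _ => Real.one_sub_le_exp_neg _

lemma le_prod_one_sub_mul_add_sum (hμ : ∀ n, μ n ∈ Icc (0 : ℝ) 1) (hc : ∀ n, 0 ≤ c n)
    (h : ∀ n, a (n + 1) ≤ (1 - μ n) * a n + c n) (N m : ℕ) :
    a (m + N) ≤ (∏ i ∈ range m, (1 - μ (i + N))) * a N + ∑ i ∈ range m, c (i + N) := by
  induction m with
  | zero => simp
  | succ m ih =>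
    set P := ∏ i ∈ range m, (1 - μ (i + N))
    set S := ∑ i ∈ range m, c (i + N)
    obtain ⟨hμ0, hμ1⟩ := hμ (m + N)
    have hS : 0 ≤ S := sum_nonneg fun i _ => hc _
    rw [prod_range_succ, sum_range_succ, add_right_comm]
    calc a (m + N + 1) ≤ (1 - μ (m + N)) * a (m + N) + c (m + N) := h _
      _ ≤ (1 - μ (m + N)) * (P * a N + S) + c (m + N) := by gcongr
      _ ≤ P * (1 - μ (m + N)) * a N + (S + c (m + N)) := by nlinarith

/-- A form of Xu's lemma on recursive inequalities. -/
theorem tendsto_zero_of_le_one_sub_mul_add (ha : ∀ n, 0 ≤ a n) (hμ : ∀ n, μ n ∈ Icc (0 : ℝ) 1)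
    (hμdiv : ¬Summable μ) (hc0 : ∀ n, 0 ≤ c n) (hc : Summable c)
    (h : ∀ n, a (n + 1) ≤ (1 - μ n) * a n + c n) : Tendsto a atTop (𝓝 0) := by
  refine tendsto_order.2 ⟨fun b hb => .of_forall fun n => hb.trans_le (ha n), fun ε hε => ?_⟩
  obtain ⟨N, hN⟩ : ∃ N, ∑' k, c (k + N) < ε / 2 :=
    ((tendsto_sum_nat_add c).eventually (gt_mem_nhds (half_pos hε))).exists
  have hP : Tendsto (fun m => (∏ i ∈ range m, (1 - μ (i + N))) * a N) atTop (𝓝 0) := by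
    simpa using (tendsto_prod_one_sub_of_not_summable (fun i => hμ (i + N))
      ((summable_nat_add_iff N).not.2 hμdiv)).mul_const (a N)
  obtain ⟨M, hM⟩ := eventually_atTop.1 (hP.eventually (gt_mem_nhds (half_pos hε)))
  refine eventually_atTop.2 ⟨M + N, fun n hn => ?_⟩
  obtain ⟨m, rfl⟩ := Nat.exists_eq_add_of_le' ((Nat.le_add_left N M).trans hn)
  have htail : ∑ i ∈ range m, c (i + N) ≤ ∑' k, c (k + N) :=
    ((summable_nat_add_iff N).2 hc).sum_le_tsum _ fun k _ => hc0 _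
  calc a (m + N) ≤ (∏ i ∈ range m, (1 - μ (i + N))) * a N + ∑ i ∈ range m, c (i + N) :=
        le_prod_one_sub_mul_add_sum hμ hc0 h N m
    _ < ε / 2 + ε / 2 := add_lt_add_of_lt_of_le (hM m (by omega)) (htail.trans hN.le)
    _ = ε := add_halves ε

end XuLemma

lemma not_summable_nat_add_of_tendsto_sum_Icc {f : ℕ → ℝ} (hf : ∀ n ≥ 1, 0 ≤ f n)
    (hdiv : Tendsto (fun m => ∑ i ∈ Finset.Icc 1 m, f i) atTop atTop) (k : ℕ) :
    ¬Summable fun n => f (n + (k + 1)) := by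
  have hsum : ∀ m, ∑ i ∈ range m, f (i + 1) = ∑ i ∈ Finset.Icc 1 m, f i := fun m => by
    rw [range_eq_Ico, sum_Ico_add' f 0 m 1, zero_add]
    rfl
  simp_rw [← add_assoc]
  rw [summable_nat_add_iff (f := fun n => f (n + 1)) k,
    not_summable_iff_tendsto_nat_atTop_of_nonneg fun n => hf _ n.succ_pos]
  simpa only [hsum] using hdiv

section Halpern

variable {X : Type*} [NormedAddCommGroup X] [NormedSpace ℝ X] {T : X → X} {lam : ℕ → ℝ}
  {x₀ : X} {x : ℕ → X}

lemma halpern_mem {C : Set X} (hconv : Convex ℝ C) (hTmaps : MapsTo T C C)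
    (hlam : ∀ n ≥ 1, lam n ∈ Icc (0 : ℝ) 1) (hx₀ : x₀ ∈ C) (hx0 : x 0 = x₀)
    (hrec : ∀ n, x (n + 1) = lam (n + 1) • x₀ + (1 - lam (n + 1)) • T (x n)) (n : ℕ) :
    x n ∈ C := by
  induction n with
  | zero => exact hx0 ▸ hx₀
  | succ n ih =>
    obtain ⟨h0, h1⟩ := hlam (n + 1) n.succ_pos
    rw [hrec n]
    exact hconv hx₀ (hTmaps ih) h0 (sub_nonneg.2 h1) (add_sub_cancel _ _)

lemma norm_halpern_sub_apply_le {M : ℝ} {n : ℕ}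
    (hrec : ∀ n, x (n + 1) = lam (n + 1) • x₀ + (1 - lam (n + 1)) • T (x n)) (hlam : 0 ≤ lam (n + 1))
    (hM : ‖x₀ - T (x n)‖ ≤ M) : ‖x n - T (x n)‖ ≤ ‖x (n + 1) - x n‖ + lam (n + 1) * M := by
  have hstep : x (n + 1) - T (x n) = lam (n + 1) • (x₀ - T (x n)) := by rw [hrec]; module
  calc ‖x n - T (x n)‖ ≤ ‖x n - x (n + 1)‖ + ‖x (n + 1) - T (x n)‖ :=
        norm_sub_le_norm_sub_add_norm_sub _ _ _
    _ ≤ ‖x (n + 1) - x n‖ + lam (n + 1) * M := by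
        rw [norm_sub_rev, hstep, norm_smul, Real.norm_of_nonneg hlam]
        gcongr

lemma norm_halpern_succ_sub_le {M : ℝ} {n : ℕ}
    (hrec : ∀ n, x (n + 1) = lam (n + 1) • x₀ + (1 - lam (n + 1)) • T (x n)) (hlam : lam (n + 2) ∈ Icc (0 : ℝ) 1)
    (hM : ‖x₀ - T (x n)‖ ≤ M) (hT : ‖T (x (n + 1)) - T (x n)‖ ≤ ‖x (n + 1) - x n‖) :
    ‖x (n + 2) - x (n + 1)‖ ≤
      (1 - lam (n + 2)) * ‖x (n + 1) - x n‖ + |lam (n + 2) - lam (n + 1)| * M := by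
  have hdiff : x (n + 2) - x (n + 1) = (lam (n + 2) - lam (n + 1)) • (x₀ - T (x n)) +
      (1 - lam (n + 2)) • (T (x (n + 1)) - T (x n)) := by
    rw [hrec (n + 1), hrec n]; module
  have h1 : 0 ≤ 1 - lam (n + 2) := sub_nonneg.2 hlam.2
  calc ‖x (n + 2) - x (n + 1)‖
      ≤ |lam (n + 2) - lam (n + 1)| * ‖x₀ - T (x n)‖ +
          (1 - lam (n + 2)) * ‖T (x (n + 1)) - T (x n)‖ := by
        rw [hdiff]
        refine (norm_add_le _ _).trans_eq ?_
        rw [norm_smul, norm_smul, Real.norm_eq_abs, Real.norm_of_nonneg h1]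
    _ ≤ _ := by rw [add_comm]; gcongr

end Halpern

theorem halpern_asymptotic_regularity_general
    {X : Type*} [NormedAddCommGroup X] [NormedSpace ℝ X]
    (C : Set X) (hconv : Convex ℝ C)
    (T : X → X) (hTmaps : Set.MapsTo T C C)
    (hT : ∀ u ∈ C, ∀ v ∈ C, ‖T u - T v‖ ≤ ‖u - v‖)
    (lam : ℕ → ℝ) (hlam : ∀ n ≥ 1, lam n ∈ Set.Icc (0:ℝ) 1)
    (x₀ : X) (hx₀ : x₀ ∈ C) (x : ℕ → X) (hx0 : x 0 = x₀)
    (hrec : ∀ n : ℕ, x (n + 1) = lam (n + 1) • x₀ + (1 - lam (n + 1)) • T (x n))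
    (hlim : Filter.Tendsto lam Filter.atTop (nhds 0))
    (hdiv : Filter.Tendsto (fun m => ∑ i ∈ Finset.Icc 1 m, lam i) Filter.atTop Filter.atTop)
    (hsum : Summable (fun n : ℕ => |lam (n + 2) - lam (n + 1)|))
    (hbound : ∃ K : ℝ, ∀ n : ℕ, ‖x n‖ ≤ K) :
    Filter.Tendsto (fun n => ‖x n - T (x n)‖) Filter.atTop (nhds 0) := by
  obtain ⟨K, hK⟩ := hbound
  have hmem := halpern_mem hconv hTmaps hlam hx₀ hx0 hrec
  have hlam' : ∀ n, lam (n + 1) ∈ Icc (0 : ℝ) 1 := fun n => hlam _ n.succ_pos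
  set M := ‖x₀ - T x₀‖ + ‖x₀‖ + K
  have hM : ∀ n, ‖x₀ - T (x n)‖ ≤ M := fun n => calc
    ‖x₀ - T (x n)‖ ≤ ‖x₀ - T x₀‖ + ‖T x₀ - T (x n)‖ := norm_sub_le_norm_sub_add_norm_sub _ _ _
    _ ≤ ‖x₀ - T x₀‖ + (‖x₀‖ + ‖x n‖) := by
      gcongr; exact (hT _ hx₀ _ (hmem n)).trans (norm_sub_le x₀ (x n))
    _ ≤ M := by linarith [hK n]
  have hM0 : 0 ≤ M := (norm_nonneg _).trans (hM 0)
  have hstep : Tendsto (fun n => ‖x (n + 1) - x n‖) atTop (𝓝 0) :=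
    tendsto_zero_of_le_one_sub_mul_add (fun _ => norm_nonneg _) (fun n => hlam' (n + 1))
      (not_summable_nat_add_of_tendsto_sum_Icc (fun n hn => (hlam n hn).1) hdiv 1)
      (fun _ => mul_nonneg (abs_nonneg _) hM0) (hsum.mul_right M) fun n =>
      norm_halpern_succ_sub_le hrec (hlam' (n + 1)) (hM n) (hT _ (hmem _) _ (hmem _))
  refine squeeze_zero (fun _ => norm_nonneg _)
    (fun n => norm_halpern_sub_apply_le hrec (hlam' n).1 (hM n)) ?_
  simpa using hstep.add ((hlim.comp (tendsto_add_atTop_nat 1)).mul_const M)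

theorem halpern_asymptotic_regularity
    {X : Type*} [NormedAddCommGroup X] [NormedSpace ℝ X]
    (C : Set X) (hC : C.Nonempty) (hconv : Convex ℝ C)
    (T : X → X) (hTmaps : Set.MapsTo T C C)
    (hT : ∀ u ∈ C, ∀ v ∈ C, ‖T u - T v‖ ≤ ‖u - v‖)
    (lam : ℕ → ℝ) (hlam : ∀ n ≥ 1, lam n ∈ Set.Icc (0:ℝ) 1)
    (x₀ : X) (hx₀ : x₀ ∈ C) (x : ℕ → X) (hx0 : x 0 = x₀)
    (hrec : ∀ n : ℕ, x (n + 1) = lam (n + 1) • x₀ + (1 - lam (n + 1)) • T (x n))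
    (hlim : Filter.Tendsto lam Filter.atTop (nhds 0))
    (hdiv : Filter.Tendsto (fun m => ∑ i ∈ Finset.Icc 1 m, lam i) Filter.atTop Filter.atTop)
    (hsum : Summable (fun n : ℕ => |lam (n + 2) - lam (n + 1)|))
    (hbound : ∃ K : ℝ, ∀ n : ℕ, ‖x n‖ ≤ K) :
    Filter.Tendsto (fun n => ‖x n - T (x n)‖) Filter.atTop (nhds 0) :=
  halpern_asymptotic_regularity_general C hconv T hTmaps hT lam hlam x₀ hx₀ x hx0 hrec hlim hdiv
    hsum hbound
end

section
/- Let X be a normed space, C ⊆ X a nonempty convex bounded subset, T : C → C nonexpansive, and λ_n := 1/n for n ≥ 1. Let M ∈ ℕ* with M ≥ 3·sup{‖u‖ : u ∈ C}. Then for every x ∈ C, the Halpern iteration (x_n) satisfies: for all ε ∈ (0,2) and all n ≥ exp(ln 4 · (16M/ε + 3)), we have ‖x_n - T x_n‖ < ε. In particular lim ‖x_n - Tx_n‖ = 0. -/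
set_option maxHeartbeats 2000000 in
theorem halpern_rate_harmonic
    {X : Type*} [NormedAddCommGroup X] [NormedSpace ℝ X]
    (C : Set X) (hC : C.Nonempty) (hconv : Convex ℝ C)
    (hCbdd : Bornology.IsBounded C)
    (T : X → X) (hTmaps : Set.MapsTo T C C)
    (hT : ∀ u ∈ C, ∀ v ∈ C, ‖T u - T v‖ ≤ ‖u - v‖)
    (M : ℕ) (hMpos : 1 ≤ M) (hM : ∀ u ∈ C, 3 * ‖u‖ ≤ (M : ℝ))
    (x₀ : X) (hx₀ : x₀ ∈ C) (x : ℕ → X) (hx0 : x 0 = x₀)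
    (hrec : ∀ n : ℕ, x (n + 1) = (1 / ((n : ℝ) + 1)) • x₀
      + (1 - 1 / ((n : ℝ) + 1)) • T (x n)) :
    (∀ ε : ℝ, 0 < ε → ε < 2 →
      ∀ n : ℕ, Real.exp (Real.log 4 * (16 * M / ε + 3)) ≤ (n : ℝ) →
        ‖x n - T (x n)‖ < ε) ∧
    Filter.Tendsto (fun n => ‖x n - T (x n)‖) Filter.atTop (nhds 0) := by
  have hM1 : (1:ℝ) ≤ (M:ℝ) := by exact_mod_cast hMpos
  -- all iterates stay in C
  have hxC : ∀ n, x n ∈ C := by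
    intro n
    induction n with
    | zero => rw [hx0]; exact hx₀
    | succ n ih =>
      rw [hrec n]
      have hn1 : (0:ℝ) < (n:ℝ) + 1 := by positivity
      have ha : (0:ℝ) ≤ 1 / ((n:ℝ) + 1) := by positivity
      have hb : (0:ℝ) ≤ 1 - 1 / ((n:ℝ) + 1) := by
        have : 1 / ((n:ℝ) + 1) ≤ 1 := by
          rw [div_le_one hn1]; linarith
        linarith
      exact hconv hx₀ (hTmaps ih) ha hb (by ring)
  -- diameter bound
  have hdist : ∀ u ∈ C, ∀ v ∈ C, ‖u - v‖ ≤ 2 * (M:ℝ) / 3 := by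
    intro u hu v hv
    have h1 := hM u hu
    have h2 := hM v hv
    have h3 := norm_sub_le u v
    linarith
  -- one-step recurrence inequality
  have hd : ∀ n : ℕ, ((n:ℝ) + 2) * ‖x (n+2) - x (n+1)‖ ≤
      ((n:ℝ) + 1) * ‖x (n+1) - x n‖ + (2 * (M:ℝ) / 3) / ((n:ℝ) + 1) := by
    intro n
    have hn2 : (0:ℝ) < (n:ℝ) + 2 := by positivity
    have hn1 : (0:ℝ) < (n:ℝ) + 1 := by positivity
    have hid : x (n+2) - x (n+1)
        = (1 - 1/((n:ℝ)+2)) • (T (x (n+1)) - T (x n))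
          - (1/((n:ℝ)+1) - 1/((n:ℝ)+2)) • (x₀ - T (x n)) := by
      rw [hrec (n+1), hrec n]
      push_cast
      module
    have hTle : ‖T (x (n+1)) - T (x n)‖ ≤ ‖x (n+1) - x n‖ :=
      hT _ (hxC _) _ (hxC _)
    have hx0T : ‖x₀ - T (x n)‖ ≤ 2*(M:ℝ)/3 := hdist _ hx₀ _ (hTmaps (hxC n))
    have hca : (0:ℝ) ≤ 1 - 1/((n:ℝ)+2) := by
      have : 1 / ((n:ℝ) + 2) ≤ 1 := by rw [div_le_one hn2]; linarith
      linarith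
    have hcb : (0:ℝ) ≤ 1/((n:ℝ)+1) - 1/((n:ℝ)+2) := by
      have : 1 / ((n:ℝ) + 2) ≤ 1/((n:ℝ)+1) := by
        apply div_le_div_of_nonneg_left one_pos.le hn1; linarith
      linarith
    have h1 : ‖x (n+2) - x (n+1)‖ ≤
        (1 - 1/((n:ℝ)+2)) * ‖x (n+1) - x n‖
          + (1/((n:ℝ)+1) - 1/((n:ℝ)+2)) * (2*(M:ℝ)/3) := by
      rw [hid]
      refine le_trans (norm_sub_le _ _) ?_
      rw [norm_smul, norm_smul, Real.norm_eq_abs, Real.norm_eq_abs,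
        abs_of_nonneg hca, abs_of_nonneg hcb]
      have h2 : (1 - 1/((n:ℝ)+2)) * ‖T (x (n+1)) - T (x n)‖ ≤
          (1 - 1/((n:ℝ)+2)) * ‖x (n+1) - x n‖ :=
        mul_le_mul_of_nonneg_left hTle hca
      have h3 : (1/((n:ℝ)+1) - 1/((n:ℝ)+2)) * ‖x₀ - T (x n)‖ ≤
          (1/((n:ℝ)+1) - 1/((n:ℝ)+2)) * (2*(M:ℝ)/3) :=
        mul_le_mul_of_nonneg_left hx0T hcb
      linarith
    have h4 : ((n:ℝ)+2) * ‖x (n+2) - x (n+1)‖ ≤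
        ((n:ℝ)+2) * ((1 - 1/((n:ℝ)+2)) * ‖x (n+1) - x n‖
          + (1/((n:ℝ)+1) - 1/((n:ℝ)+2)) * (2*(M:ℝ)/3)) :=
      mul_le_mul_of_nonneg_left h1 hn2.le
    have h5 : ((n:ℝ)+2) * ((1 - 1/((n:ℝ)+2)) * ‖x (n+1) - x n‖
          + (1/((n:ℝ)+1) - 1/((n:ℝ)+2)) * (2*(M:ℝ)/3))
        = ((n:ℝ)+1) * ‖x (n+1) - x n‖ + (2*(M:ℝ)/3) / ((n:ℝ)+1) := by
      field_simp
      ring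
    linarith
  -- main induction: logarithmic bound on successive differences
  have hS : ∀ k : ℕ, ((k:ℝ)+2) * ‖x (k+2) - x (k+1)‖ ≤
      (2*(M:ℝ)/3) * (2 + Real.log ((k:ℝ)+1)) := by
    intro k
    induction k with
    | zero =>
      have h1 : ‖x 2 - x 1‖ ≤ 2*(M:ℝ)/3 := hdist _ (hxC 2) _ (hxC 1)
      simp only [Nat.cast_zero]
      rw [show (0:ℝ)+1 = 1 by ring, Real.log_one]
      nlinarith
    | succ k ih =>
      have hk2 : (0:ℝ) < (k:ℝ) + 2 := by positivity
      have hk1 : (0:ℝ) < (k:ℝ) + 1 := by positivity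
      have hlog : Real.log ((k:ℝ)+1) + 1/((k:ℝ)+2) ≤ Real.log ((k:ℝ)+2) := by
        have hpos : (0:ℝ) < ((k:ℝ)+1)/((k:ℝ)+2) := by positivity
        have h1 := Real.log_le_sub_one_of_pos hpos
        rw [Real.log_div (by linarith) (by linarith)] at h1
        have h2 : ((k:ℝ)+1)/((k:ℝ)+2) - 1 = -(1/((k:ℝ)+2)) := by
          field_simp
          norm_num
        rw [h2] at h1
        linarith
      have hstep := hd (k+1)
      have hidx1 : k+1+2 = k+3 := by omega
      have hidx2 : k+1+1 = k+2 := by omega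
      rw [hidx1, hidx2] at hstep
      push_cast at hstep
      rw [hidx1, hidx2]
      push_cast
      have hM0 : (0:ℝ) ≤ 2*(M:ℝ)/3 := by positivity
      have hmul : (2*(M:ℝ)/3) * (Real.log ((k:ℝ)+1) + 1/((k:ℝ)+2))
          ≤ (2*(M:ℝ)/3) * Real.log ((k:ℝ)+2) :=
        mul_le_mul_of_nonneg_left hlog hM0
      have hdiv : 2*(M:ℝ)/3/((k:ℝ)+1+1) = 2*(M:ℝ)/3*(1/((k:ℝ)+2)) := by
        rw [mul_one_div]; ring_nf
      have hco : ((k:ℝ)+1+1) = (k:ℝ)+2 := by ring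
      have hco2 : ((k:ℝ)+1+2) = (k:ℝ)+3 := by ring
      rw [hdiv, hco, hco2] at hstep
      rw [hco, hco2]
      nlinarith [hmul, ih]
  -- asymptotic regularity bound
  have hA : ∀ k : ℕ, ‖x (k+1) - T (x (k+1))‖ ≤
      (2*(M:ℝ)/3) * (3 + Real.log ((k:ℝ)+1)) / ((k:ℝ)+2) := by
    intro k
    have hk2 : (0:ℝ) < (k:ℝ) + 2 := by positivity
    have hid : x (k+2) - T (x (k+1)) = (1/((k:ℝ)+2)) • (x₀ - T (x (k+1))) := by
      rw [hrec (k+1)]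
      push_cast
      module
    have h1 : ‖x (k+2) - T (x (k+1))‖ ≤ (1/((k:ℝ)+2)) * (2*(M:ℝ)/3) := by
      rw [hid, norm_smul, Real.norm_eq_abs, abs_of_nonneg (by positivity)]
      exact mul_le_mul_of_nonneg_left
        (hdist _ hx₀ _ (hTmaps (hxC (k+1)))) (by positivity)
    have h2 : ‖x (k+1) - T (x (k+1))‖ ≤ ‖x (k+2) - x (k+1)‖ + ‖x (k+2) - T (x (k+1))‖ := by
      have := norm_sub_le (x (k+1) - x (k+2)) (T (x (k+1)) - x (k+2))
      have he : x (k+1) - x (k+2) - (T (x (k+1)) - x (k+2)) = x (k+1) - T (x (k+1)) := by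
        abel
      rw [he] at this
      rw [norm_sub_rev (x (k+2)) (x (k+1)), norm_sub_rev (x (k+2)) (T (x (k+1)))]
      exact this
    have h3 : ‖x (k+2) - x (k+1)‖ ≤ (2*(M:ℝ)/3) * (2 + Real.log ((k:ℝ)+1)) / ((k:ℝ)+2) := by
      rw [le_div_iff₀ hk2]
      nlinarith [hS k]
    have h4 : (2*(M:ℝ)/3) * (2 + Real.log ((k:ℝ)+1)) / ((k:ℝ)+2)
        + (1/((k:ℝ)+2)) * (2*(M:ℝ)/3)
        = (2*(M:ℝ)/3) * (3 + Real.log ((k:ℝ)+1)) / ((k:ℝ)+2) := by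
      field_simp
      ring
    linarith
  -- the quantitative statement
  have main : ∀ ε : ℝ, 0 < ε → ε < 2 → ∀ n : ℕ,
      Real.exp (Real.log 4 * (16 * (M:ℝ) / ε + 3)) ≤ (n:ℝ) → ‖x n - T (x n)‖ < ε := by
    intro ε hε hε2 n hn
    obtain ⟨t, ht⟩ : ∃ t : ℝ, t = 16 * (M:ℝ) / ε + 3 := ⟨_, rfl⟩
    rw [← ht] at hn
    have ht11 : 11 ≤ t := by
      have h8 : 8 ≤ 16 * (M:ℝ) / ε := by
        rw [le_div_iff₀ hε]; nlinarith
      rw [ht]; linarith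
    have hlog4 : (4:ℝ)/3 ≤ Real.log 4 := by
      have h2 : Real.log 4 = 2 * Real.log 2 := by
        rw [show (4:ℝ) = 2^2 by norm_num, Real.log_pow]
        push_cast; ring
      have := Real.log_two_gt_d9
      rw [h2]; linarith
    have hexp : t^2 ≤ Real.exp (Real.log 4 * t) := by
      have h4 : (Real.exp (Real.log 4 * t / 4))^4 = Real.exp (Real.log 4 * t) := by
        rw [← Real.exp_nat_mul]
        congr 1
        push_cast
        ring
      have h5 : 1 + Real.log 4 * t / 4 ≤ Real.exp (Real.log 4 * t / 4) := by
        have := Real.add_one_le_exp (Real.log 4 * t / 4)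
        linarith
      have h6 : t/3 ≤ 1 + Real.log 4 * t / 4 := by
        nlinarith [mul_nonneg (by linarith : (0:ℝ) ≤ Real.log 4 - 4/3)
          (by linarith : (0:ℝ) ≤ t)]
      have h7 : (t/3)^4 ≤ (Real.exp (Real.log 4 * t / 4))^4 :=
        pow_le_pow_left₀ (by linarith) (le_trans h6 h5) 4
      have ht2 : 121 ≤ t^2 := by nlinarith
      have h9 : t^2 ≤ (t/3)^4 := by nlinarith [sq_nonneg t]
      rw [← h4]
      linarith
    have hrn : t^2 ≤ (n:ℝ) := le_trans hexp hn
    have hn121 : (121:ℝ) ≤ (n:ℝ) := by nlinarith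
    have hn1 : 1 ≤ n := by exact_mod_cast (by linarith : (1:ℝ) ≤ (n:ℝ))
    obtain ⟨k, rfl⟩ : ∃ k, n = k + 1 := ⟨n - 1, by omega⟩
    have hr : ((k:ℝ)+1) = ((k+1 : ℕ):ℝ) := by push_cast; ring
    set r : ℝ := (k:ℝ) + 1 with hrdef
    have hr0 : (0:ℝ) < r := by positivity
    have hrt : t^2 ≤ r := by rw [hr]; exact_mod_cast hrn
    set s : ℝ := Real.sqrt r with hs
    have hs2 : s^2 = r := Real.sq_sqrt hr0.le
    have hts : t ≤ s := by
      have h1 : Real.sqrt (t^2) ≤ Real.sqrt r := Real.sqrt_le_sqrt hrt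
      rwa [Real.sqrt_sq (by linarith : (0:ℝ) ≤ t)] at h1
    have h11s : (11:ℝ) ≤ s := le_trans ht11 hts
    have hlogr : Real.log r ≤ 2*s - 2 := by
      have h1 := Real.log_le_sub_one_of_pos (Real.sqrt_pos.2 hr0)
      have h2 : Real.log (Real.sqrt r) = Real.log r / 2 := Real.log_sqrt hr0.le
      rw [h2] at h1
      linarith
    have hεt : ε * t = 16*(M:ℝ) + 3*ε := by
      rw [ht]; field_simp
    have hεs : 16*(M:ℝ) + 3*ε ≤ ε * s := by
      rw [← hεt]
      exact mul_le_mul_of_nonneg_left hts hε.le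
    have hεs2 : (16*(M:ℝ) + 3*ε) * s ≤ ε * s^2 := by
      nlinarith
    have hkey : (2*(M:ℝ)/3) * (3 + Real.log r) < ε * (r + 1) := by
      have h3 : 3 + Real.log r ≤ 1 + 2*s := by linarith
      have h4 : (2*(M:ℝ)/3) * (3 + Real.log r) ≤ (2*(M:ℝ)/3) * (1 + 2*s) :=
        mul_le_mul_of_nonneg_left h3 (by positivity)
      have h5 : (2*(M:ℝ)/3) * (1 + 2*s) < ε * s^2 + ε := by
        nlinarith [mul_nonneg (by linarith : (0:ℝ) ≤ (M:ℝ)) (by linarith : (0:ℝ) ≤ s - 11),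
          mul_nonneg hε.le (by linarith : (0:ℝ) ≤ s)]
      rw [hs2] at h5
      linarith
    have hAk := hA k
    have hfin : (2*(M:ℝ)/3) * (3 + Real.log r) / ((k:ℝ)+2) < ε := by
      rw [div_lt_iff₀ (by positivity : (0:ℝ) < (k:ℝ)+2)]
      have : r + 1 = (k:ℝ) + 2 := by rw [hrdef]; ring
      rw [← this]
      linarith
    exact lt_of_le_of_lt hAk hfin
  refine ⟨main, ?_⟩
  rw [Metric.tendsto_atTop]
  intro ε hε
  set ε' : ℝ := min ε 1 with hε'
  have hε'0 : 0 < ε' := lt_min hε one_pos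
  have hε'2 : ε' < 2 := lt_of_le_of_lt (min_le_right _ _) one_lt_two
  refine ⟨⌈Real.exp (Real.log 4 * (16 * (M:ℝ) / ε' + 3))⌉₊, fun n hn => ?_⟩
  have hcast : Real.exp (Real.log 4 * (16 * (M:ℝ) / ε' + 3)) ≤ (n:ℝ) :=
    le_trans (Nat.le_ceil _) (by exact_mod_cast hn)
  have h1 : ‖x n - T (x n)‖ < ε' := main ε' hε'0 hε'2 n hcast
  have h2 : dist (‖x n - T (x n)‖) 0 = ‖x n - T (x n)‖ := by
    simp [Real.dist_eq, abs_of_nonneg (norm_nonneg _)]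
  rw [h2]
  exact lt_of_lt_of_le h1 (min_le_left _ _)
end
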